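/- arXiv:1605.04355 — 3 statements merged into one kernel-verified Lean document; each statement's English description precedes it below -/
import Mathlib

section
/- For the geodesic ball of radius 1 in the hyperbolic plane (h(t) = sinh t, m=2), ∫_0^1 (∫_0^s sinh(t)dt)/sinh(s) ds = log((1+e)²/(4e)). -/
/-! The inner integral is `cosh s - 1`, and by the half-angle formulas
`(cosh s - 1) / sinh s = tanh (s / 2)`, which has antiderivative `2 log cosh (s / 2)`.
It remains to note `cosh (1 / 2) ^ 2 = (e + 2 + e⁻¹) / 4 = (1 + e) ^ 2 / (4 e)`. -/

open Real

lemma Real.continuous_tanh : Continuous tanh := by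
  simp only [funext fun x => tanh_eq_sinh_div_cosh x]
  exact continuous_sinh.div continuous_cosh fun x => (cosh_pos x).ne'

lemma integral_sinh (a b : ℝ) : ∫ x in a..b, sinh x = cosh b - cosh a :=
  intervalIntegral.integral_eq_sub_of_hasDerivAt (fun x _ => hasDerivAt_cosh x)
    (continuous_sinh.intervalIntegrable a b)

-- Holds at `x = 0` too, where the left side is `0 / 0 = 0`.
lemma cosh_sub_one_div_sinh (x : ℝ) : (cosh x - 1) / sinh x = tanh (x / 2) := by
  obtain ⟨y, rfl⟩ : ∃ y, x = 2 * y := ⟨x / 2, by ring⟩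
  rw [mul_div_cancel_left₀ y two_ne_zero, cosh_two_mul, sinh_two_mul, cosh_sq,
    tanh_eq_sinh_div_cosh]
  rcases eq_or_ne (sinh y) 0 with h | h
  · simp [h]
  · field_simp [(cosh_pos y).ne']
    ring

lemma hasDerivAt_two_mul_log_cosh_half (x : ℝ) :
    HasDerivAt (fun x => 2 * log (cosh (x / 2))) (tanh (x / 2)) x := by
  have := (((hasDerivAt_id' x).div_const 2).cosh.log (cosh_pos _).ne').const_mul 2
  refine this.congr_deriv ?_
  rw [tanh_eq_sinh_div_cosh]
  field_simp

lemma two_mul_log_cosh_half_one :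
    2 * log (cosh (1 / 2)) = log ((1 + exp 1) ^ 2 / (4 * exp 1)) := by
  have hsq : cosh (1 / 2) ^ 2 = (1 + exp 1) ^ 2 / (4 * exp 1) := by
    have hexp : exp 1 = exp (1 / 2) ^ 2 := by rw [← exp_nat_mul]; norm_num
    rw [cosh_eq, exp_neg, hexp]
    field_simp
    ring
  rw [← hsq, log_pow]
  push_cast; ring

/-- For the unit geodesic ball in the hyperbolic plane (`h = sinh`, `m = 2`),
`∫_0^1 (∫_0^s sinh t dt)/sinh s ds = log((1+e)²/(4e))`, the sum of
reciprocals of the radial Dirichlet eigenvalues. -/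
theorem integral_VS_hyperbolic :
    (∫ s in (0:ℝ)..1, (∫ t in (0:ℝ)..s, Real.sinh t) / Real.sinh s) =
      Real.log ((1 + Real.exp 1) ^ 2 / (4 * Real.exp 1)) := by
  simp only [integral_sinh, cosh_zero, cosh_sub_one_div_sinh]
  rw [intervalIntegral.integral_eq_sub_of_hasDerivAt
    (fun x _ => hasDerivAt_two_mul_log_cosh_half x)
    ((continuous_tanh.comp (continuous_id.div_const 2)).intervalIntegrable 0 1)]
  simpa using two_mul_log_cosh_half_one
end

section
/- With α = l+m-1, β = 2l+m-2, the L²-norm of the Green function g_l satisfies ∫_0^r ∫_0^r g_l(x,y)² ω_m² x^{m-1} y^{m-1} dy dx = r⁴/(2(2l+m)²(2+2l+m)). -/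
/-! With `K = β = 2l + m - 2 ∈ ℕ`, the weighted square `ω² (xy)^{m-1} g_l(x,y)²` is the symmetric
kernel `(xy)^{K+1} (max(x,y)^{-K} - r^{-K})² / K²`. By symmetry its integral over the square is
twice the integral over the triangle `y ≤ x`, where `max(x,y) = x`: the inner integral is then
`x³ (1 - (x/r)^K)² / (K+2)`, a polynomial in `x` whose integral over `[0, r]` is
`r⁴ K² / (4 (K+2) (K+4))`. Splitting instead at `y = x` with `x` outermost would produce the
negative powers `y^{1-K}` (and a logarithm when `K = 2`). -/

open MeasureTheory Set

/-- The Green function `g_l(x,y) = x^l y^α/(β ω y^{m-1})·(1/max(x,y)^β − 1/r^β)`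
of `L_l u = u'' + (m-1)u'/x − l(l+m-2)u/x²`, with `α = l+m-1`, `β = 2l+m-2`. -/
noncomputable def greenBessel (l m : ℕ) (ω r x y : ℝ) : ℝ :=
  x ^ l * Real.rpow y ((l:ℝ) + (m:ℝ) - 1) / ((2 * (l:ℝ) + (m:ℝ) - 2) * ω * y ^ (m - 1)) *
    (1 / Real.rpow (max x y) (2 * (l:ℝ) + (m:ℝ) - 2) - 1 / Real.rpow r (2 * (l:ℝ) + (m:ℝ) - 2))

open Function

theorem integral_prod_self_eq_two_mul_setIntegral_le_of_symm {α : Type*} [MeasurableSpace α]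
    [LinearOrder α] [TopologicalSpace α] [OrderClosedTopology α] [SecondCountableTopology α]
    [OpensMeasurableSpace α] {μ : Measure α} [SFinite μ] [NullSingletonClass μ] {f : α × α → ℝ}
    (hf : Integrable f (μ.prod μ)) (hsymm : ∀ p, f p.swap = f p) :
    ∫ p, f p ∂μ.prod μ = 2 * ∫ p in {p : α × α | p.2 ≤ p.1}, f p ∂μ.prod μ := by
  set S := {p : α × α | p.2 ≤ p.1}
  have hS : MeasurableSet S := measurableSet_le measurable_snd measurable_fst
  have hswap : ∫ p in Sᶜ, f p ∂μ.prod μ = ∫ p in {p : α × α | p.2 < p.1}, f p ∂μ.prod μ := by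
    rw [← Measure.measurePreserving_swap.setIntegral_preimage_emb
      MeasurableEquiv.prodComm.measurableEmbedding]
    have hpre : Prod.swap ⁻¹' Sᶜ = {p : α × α | p.2 < p.1} := by ext; simp [S]
    simp only [hsymm, hpre]
  have hdiag : {p : α × α | p.2 < p.1} =ᵐ[μ.prod μ] S := by
    have hne : ∀ᵐ p ∂μ.prod μ, p.2 ≠ p.1 :=
      (Measure.ae_prod_iff_ae_ae (measurableSet_eq_fun measurable_snd measurable_fst).compl).2
        (Filter.Eventually.of_forall fun x => compl_mem_ae_iff.mpr (measure_singleton x))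
    filter_upwards [hne] with p hp
    exact propext ⟨le_of_lt, fun h => lt_of_le_of_ne h hp⟩
  calc ∫ p, f p ∂μ.prod μ = ∫ p in S, f p ∂μ.prod μ + ∫ p in Sᶜ, f p ∂μ.prod μ :=
        (integral_add_compl hS hf).symm
    _ = 2 * ∫ p in S, f p ∂μ.prod μ := by rw [hswap, setIntegral_congr_set hdiag]; ring

theorem setIntegral_Ioc_Ioc_eq_two_mul_of_symm {a b : ℝ} {f : ℝ → ℝ → ℝ}
    (hf : IntegrableOn (uncurry f) (Ioc a b ×ˢ Ioc a b)) (hsymm : ∀ x y, f x y = f y x) :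
    ∫ x in Ioc a b, ∫ y in Ioc a b, f x y = 2 * ∫ x in Ioc a b, ∫ y in Ioc a x, f x y := by
  set μ := volume.restrict (Ioc a b)
  have hS : MeasurableSet {p : ℝ × ℝ | p.2 ≤ p.1} :=
    measurableSet_le measurable_snd measurable_fst
  have hf' : Integrable (uncurry f) (μ.prod μ) := by
    rwa [Measure.prod_restrict, ← Measure.volume_eq_prod]
  calc ∫ x in Ioc a b, ∫ y in Ioc a b, f x y = ∫ p, uncurry f p ∂μ.prod μ :=
        (integral_prod _ hf').symm
    _ = 2 * ∫ p, {p : ℝ × ℝ | p.2 ≤ p.1}.indicator (uncurry f) p ∂μ.prod μ := by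
        rw [integral_prod_self_eq_two_mul_setIntegral_le_of_symm hf' fun p => hsymm _ _,
          integral_indicator hS]
    _ = 2 * ∫ x in Ioc a b, ∫ y in Ioc a x, f x y := by
        rw [integral_prod _ (hf'.indicator hS)]
        congr 1
        refine setIntegral_congr_fun measurableSet_Ioc fun x hx => ?_
        have hslice : Iic x ∩ Ioc a b = Ioc a x := by
          rw [inter_comm, Ioc_inter_Iic, min_eq_right hx.2]
        rw [← hslice, ← Measure.restrict_restrict measurableSet_Iic,
          ← integral_indicator measurableSet_Iic]
        rfl

noncomputable def greenKernel (K : ℕ) (r x y : ℝ) : ℝ :=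
  (x * y) ^ (K + 1) * (1 / max x y ^ K - 1 / r ^ K) ^ 2

theorem greenBessel_sq_mul_weight {l m K : ℕ} (hm : 1 ≤ m) (hK : (K : ℝ) = 2 * l + m - 2)
    (hK0 : K ≠ 0) {ω : ℝ} (hω : ω ≠ 0) (r : ℝ) {x y : ℝ} (hx : 0 < x) (hy : 0 < y) :
    greenBessel l m ω r x y ^ 2 * ω ^ 2 * x ^ (m - 1) * y ^ (m - 1) =
      greenKernel K r x y / K ^ 2 := by
  obtain ⟨n, rfl⟩ : ∃ n, m = n + 1 := ⟨m - 1, by omega⟩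
  have hα : (l : ℝ) + (n + 1 : ℕ) - 1 = ((l + n : ℕ) : ℝ) := by push_cast; ring
  have hexp : K + 1 = l + l + n := by
    have : ((K + 1 : ℕ) : ℝ) = ((l + l + n : ℕ) : ℝ) := by push_cast at hK ⊢; linarith
    exact_mod_cast this
  simp only [greenBessel, greenKernel, ← hK, hα, Real.rpow_eq_pow, Real.rpow_natCast,
    Nat.add_sub_cancel, pow_add y l n, hexp, mul_pow, pow_add x, pow_add y]
  have : y ^ n ≠ 0 := by positivity
  field_simp

theorem greenKernel_comm (K : ℕ) (r x y : ℝ) : greenKernel K r x y = greenKernel K r y x := by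
  simp only [greenKernel, max_comm x y, mul_comm x y]

theorem norm_greenKernel_le {K : ℕ} {r x y : ℝ} (hx : x ∈ Ioc 0 r) (hy : y ∈ Ioc 0 r) :
    ‖greenKernel K r x y‖ ≤ r ^ 2 := by
  set M := max x y
  have hM : 0 < M := lt_max_of_lt_left hx.1
  have hMr : M ≤ r := max_le hx.2 hy.2
  have hr : 0 < r := hM.trans_le hMr
  have hxy : 0 ≤ x * y := (mul_pos hx.1 hy.1).le
  have hD : 0 ≤ 1 / M ^ K - 1 / r ^ K := sub_nonneg.2 (by gcongr)
  have hG : 0 ≤ greenKernel K r x y := mul_nonneg (pow_nonneg hxy _) (sq_nonneg _)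
  rw [Real.norm_of_nonneg hG]
  calc greenKernel K r x y ≤ (M ^ 2) ^ (K + 1) * (1 / M ^ K) ^ 2 := by
        unfold greenKernel
        gcongr
        · rw [sq]; exact mul_le_mul (le_max_left x y) (le_max_right x y) hy.1.le hM.le
        · exact sub_le_self _ (by positivity)
    _ = M ^ 2 := by field_simp; ring
    _ ≤ r ^ 2 := by gcongr

theorem integrableOn_greenKernel (K : ℕ) {r : ℝ} :
    IntegrableOn (uncurry (greenKernel K r)) (Ioc 0 r ×ˢ Ioc 0 r) := by
  refine IntegrableOn.of_bound (by
    rw [Measure.volume_eq_prod, Measure.prod_prod]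
    exact ENNReal.mul_lt_top measure_Ioc_lt_top measure_Ioc_lt_top) ?_ (r ^ 2) ?_
  · have : Measurable (uncurry (greenKernel K r)) := by unfold greenKernel; fun_prop
    exact this.aestronglyMeasurable
  · exact (ae_restrict_iff' (measurableSet_Ioc.prod measurableSet_Ioc)).2
      (Filter.Eventually.of_forall fun p hp => norm_greenKernel_le hp.1 hp.2)

theorem setIntegral_greenKernel_Ioc (K : ℕ) {r x : ℝ} (hr : r ≠ 0) (hx : 0 < x) :
    ∫ y in Ioc 0 x, greenKernel K r x y = x ^ 3 * (1 - (x / r) ^ K) ^ 2 / (K + 2) := by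
  rw [← intervalIntegral.integral_of_le hx.le]
  have hcongr : EqOn (greenKernel K r x)
      (fun y => x ^ (K + 1) * (1 / x ^ K - 1 / r ^ K) ^ 2 * y ^ (K + 1)) (uIcc 0 x) := by
    intro y hy
    rw [uIcc_of_le hx.le] at hy
    simp only [greenKernel, max_eq_left hy.2]
    ring
  rw [intervalIntegral.integral_congr hcongr, intervalIntegral.integral_const_mul, integral_pow,
    div_pow]
  push_cast
  field_simp
  ring

theorem integral_pow_three_mul_one_sub_div_pow_sq (K : ℕ) {r : ℝ} (hr : r ≠ 0) :
    ∫ x in (0 : ℝ)..r, x ^ 3 * (1 - (x / r) ^ K) ^ 2 =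
      r ^ 4 * K ^ 2 / (4 * (K + 2) * (K + 4)) := by
  have hexpand : ∀ x : ℝ, x ^ 3 * (1 - (x / r) ^ K) ^ 2 =
      x ^ 3 - 2 / r ^ K * x ^ (K + 3) + 1 / r ^ (2 * K) * x ^ (2 * K + 3) := by
    intro x; rw [div_pow]; field_simp; ring
  simp_rw [hexpand]
  rw [intervalIntegral.integral_add, intervalIntegral.integral_sub,
    intervalIntegral.integral_const_mul, intervalIntegral.integral_const_mul]
  · simp only [integral_pow]
    push_cast
    field_simp
    ring
  all_goals exact Continuous.intervalIntegrable (by fun_prop) _ _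

/-- The `L²`-norm of the Green function `g_l` satisfies
`∫_0^r ∫_0^r g_l(x,y)² ω² x^{m-1} y^{m-1} dy dx = r⁴/(2(2l+m)²(2+2l+m))`. -/
theorem greenBessel_L2_norm (l m : ℕ) (hm : 1 ≤ m)
    (hβ : 0 < 2 * (l:ℝ) + (m:ℝ) - 2) (r ω : ℝ) (hr : 0 < r) (hω : 0 < ω) :
    (∫ x in (0:ℝ)..r, ∫ y in (0:ℝ)..r,
        (greenBessel l m ω r x y) ^ 2 * ω ^ 2 * x ^ (m - 1) * y ^ (m - 1)) =
      r ^ 4 / (2 * (2 * (l:ℝ) + (m:ℝ)) ^ 2 * (2 + 2 * (l:ℝ) + (m:ℝ))) := by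
  have h2 : 2 ≤ 2 * l + m := by exact_mod_cast (by linarith : (2 : ℝ) ≤ 2 * l + m)
  obtain ⟨K, hK⟩ : ∃ K : ℕ, (K : ℝ) = 2 * l + m - 2 :=
    ⟨2 * l + m - 2, by rw [Nat.cast_sub h2]; push_cast; ring⟩
  have hK0 : K ≠ 0 := by rintro rfl; push_cast at hK; linarith
  simp only [intervalIntegral.integral_of_le hr.le]
  calc _ = ∫ x in Ioc 0 r, ∫ y in Ioc 0 r, greenKernel K r x y / K ^ 2 :=
        setIntegral_congr_fun measurableSet_Ioc fun x hx =>
          setIntegral_congr_fun measurableSet_Ioc fun y hy =>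
            greenBessel_sq_mul_weight hm hK hK0 hω.ne' r hx.1 hy.1
    _ = 2 * (∫ x in Ioc 0 r, ∫ y in Ioc 0 x, greenKernel K r x y) / K ^ 2 := by
        simp only [integral_div]
        rw [setIntegral_Ioc_Ioc_eq_two_mul_of_symm (integrableOn_greenKernel K)
          (greenKernel_comm K r)]
    _ = 2 * (∫ x in (0 : ℝ)..r, x ^ 3 * (1 - (x / r) ^ K) ^ 2 / (K + 2)) / K ^ 2 := by
        rw [intervalIntegral.integral_of_le hr.le, setIntegral_congr_fun measurableSet_Ioc
          fun x hx => setIntegral_greenKernel_Ioc K hr.ne' hx.1]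
    _ = _ := by
        rw [intervalIntegral.integral_div, integral_pow_three_mul_one_sub_div_pow_sq K hr.ne',
          show (2 * l + m : ℝ) = K + 2 by linarith, show (2 + 2 * l + m : ℝ) = K + 4 by linarith]
        field_simp
        ring
end

section
/- With A_k = k! ∑_{i=1}^∞ a_i²/λ_i^k where 0 < λ₁ < λ₂ ≤ ⋯ → ∞, a₁ ≠ 0, and ∑ a_i² < ∞, one has lim_{k→∞} k·A_{k-1}/A_k = λ₁. -/
/-!
Normalising by `λ₁`, `A_k = k! λ₁^{-k} T_k` with `T_k = ∑ a_i² (λ₁/λ_i)^k`. Since `λ₁/λ_i < 1` for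
`i ≥ 2` and the weights `a_i²` are summable, dominated convergence gives `T_k → a₁² ≠ 0`, so
`(k+1) A_k / A_{k+1} = λ₁ T_k / T_{k+1} → λ₁`.
-/

open Filter Topology

theorem tendsto_tsum_pow_smul_of_abs_lt_one {ι E : Type*} [NormedAddCommGroup E]
    [NormedSpace ℝ E] [CompleteSpace E] {w : ι → E} {r : ι → ℝ}
    (hw : Summable fun i => ‖w i‖) (i₀ : ι) (hr₀ : r i₀ = 1) (hr : ∀ i ≠ i₀, |r i| < 1) :
    Tendsto (fun k : ℕ => ∑' i, r i ^ k • w i) atTop (𝓝 (w i₀)) := by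
  classical
  have hr_le : ∀ i, |r i| ≤ 1 := fun i => by
    rcases eq_or_ne i i₀ with rfl | hi
    · simp [hr₀]
    · exact (hr i hi).le
  have hpointwise : ∀ i, Tendsto (fun k : ℕ => r i ^ k • w i) atTop
      (𝓝 (if i = i₀ then w i₀ else 0)) := fun i => by
    rcases eq_or_ne i i₀ with rfl | hi
    · simp [hr₀]
    · simpa [hi] using (tendsto_pow_atTop_nhds_zero_of_abs_lt_one (hr i hi)).smul_const (w i)
  have hbound : ∀ k : ℕ, ∀ i, ‖r i ^ k • w i‖ ≤ ‖w i‖ := fun k i => by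
    rw [norm_smul, norm_pow, Real.norm_eq_abs]
    exact mul_le_of_le_one_left (norm_nonneg _) (pow_le_one₀ (abs_nonneg _) (hr_le i))
  simpa [tsum_ite_eq] using
    tendsto_tsum_of_dominated_convergence hw hpointwise (Eventually.of_forall hbound)

theorem tsum_div_pow_eq_tsum_mul_div_pow {ι : Type*} (w lam : ι → ℝ) {c : ℝ} (hc : c ≠ 0)
    (k : ℕ) : ∑' i, w i / lam i ^ k = (∑' i, (c / lam i) ^ k * w i) / c ^ k := by
  rw [← tsum_div_const]
  congr 1 with i
  rw [div_pow]
  field_simp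

theorem succ_mul_factorial_mul_div_factorial_succ_mul (k : ℕ) (c x y : ℝ) (hc : c ≠ 0) :
    ((k : ℝ) + 1) * ((k.factorial : ℝ) * (x / c ^ k)) / ((k + 1).factorial * (y / c ^ (k + 1)))
      = c * (x / y) := by
  push_cast [Nat.factorial_succ]
  have : (k.factorial : ℝ) ≠ 0 := by positivity
  rw [pow_succ]
  field_simp

theorem momentum_ratio_tendsto_first_eigenvalue_general (a lam : ℕ → ℝ)
    (h0 : 0 < lam 0) (h01 : lam 0 < lam 1) (hmono : Monotone lam)
    (ha0 : a 0 ≠ 0) (hsum : Summable fun i => (a i) ^ 2)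
    (A : ℕ → ℝ)
    (hA : ∀ k : ℕ, A k = (Nat.factorial k : ℝ) * ∑' i : ℕ, (a i) ^ 2 / (lam i) ^ k) :
    Tendsto (fun k : ℕ => ((k : ℝ) + 1) * A k / A (k + 1)) atTop (nhds (lam 0)) := by
  set T : ℕ → ℝ := fun k => ∑' i, (lam 0 / lam i) ^ k • (a i) ^ 2
  have hratio_lt_one : ∀ i ≠ 0, |lam 0 / lam i| < 1 := fun i hi => by
    have hlt : lam 0 < lam i := h01.trans_le (hmono (Nat.one_le_iff_ne_zero.mpr hi))
    rw [abs_div, abs_of_pos h0, abs_of_pos (h0.trans hlt), div_lt_one (h0.trans hlt)]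
    exact hlt
  have hT : Tendsto T atTop (𝓝 ((a 0) ^ 2)) :=
    tendsto_tsum_pow_smul_of_abs_lt_one hsum.norm 0 (div_self h0.ne') hratio_lt_one
  have hT_quot : Tendsto (fun k => T k / T (k + 1)) atTop (𝓝 1) := by
    have h := hT.div (hT.comp (tendsto_add_atTop_nat 1)) (pow_ne_zero 2 ha0)
    rwa [div_self (pow_ne_zero 2 ha0)] at h
  have hA_eq : ∀ k : ℕ, ((k : ℝ) + 1) * A k / A (k + 1) = lam 0 * (T k / T (k + 1)) := fun k => by
    simp only [hA, tsum_div_pow_eq_tsum_mul_div_pow _ lam h0.ne', T, smul_eq_mul]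
    exact succ_mul_factorial_mul_div_factorial_succ_mul k _ _ _ h0.ne'
  simpa [hA_eq] using hT_quot.const_mul (lam 0)

/-- Hurtado–Markvorsen–Palmer formula: with `A_k = k! ∑_i a_i²/λ_i^k` where
`0 < λ₁ < λ₂ ≤ ⋯ → ∞`, `a₁ ≠ 0` and `∑ a_i² < ∞`, one has
`lim_{k→∞} k·A_{k-1}/A_k = λ₁`.  (Here `A k` denotes `A_{k}` with indices
starting at `0` for the sequences `a`, `λ`.) -/
theorem momentum_ratio_tendsto_first_eigenvalue (a lam : ℕ → ℝ)
    (h0 : 0 < lam 0) (h01 : lam 0 < lam 1) (hmono : Monotone lam)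
    (hlim : Tendsto lam atTop atTop)
    (ha0 : a 0 ≠ 0) (hsum : Summable fun i => (a i) ^ 2)
    (A : ℕ → ℝ)
    (hA : ∀ k : ℕ, A k = (Nat.factorial k : ℝ) * ∑' i : ℕ, (a i) ^ 2 / (lam i) ^ k) :
    Tendsto (fun k : ℕ => ((k : ℝ) + 1) * A k / A (k + 1)) atTop (nhds (lam 0)) :=
  momentum_ratio_tendsto_first_eigenvalue_general a lam h0 h01 hmono ha0 hsum A hA
end
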